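/- (EM scheme, Lyapunov property.) Let A = (a_{ij}) be an m×n matrix of nonnegative integers, c ∈ ℝ^n_{>0}, and define y_A : ℝ^m_{>0} → ℝ^n_{>0} by y_A(θ)_j := c_j Π_{i=1}^m θ_i^{a_{ij}}. Let 𝒮 be an integer matrix with n columns and {b_1,…,b_r} ⊆ ℤ^n a ℤ-basis of (ker 𝒮) ∩ ℤ^n. Choose rates k_l⁺, k_l⁻ > 0 and exponent vectors d_l, e_l ∈ ℤ^m_{≥0} such that (k_l⁻/k_l⁺)·θ^{e_l − d_l} = y_A(θ)^{b_l} for all θ ∈ ℝ^m_{>0} and l = 1,…,r. Let (x, θ) : [0,∞) → ℝ^n_{>0} × ℝ^m_{>0} be differentiable with ẋ(t) = Σ_{l=1}^r b_l ( k_l⁻ θ(t)^{e_l} x(t)^{b_l⁻} − k_l⁺ θ(t)^{d_l} x(t)^{b_l⁺} ) and θ̇(t) = A(x(t) − y_A(θ(t))). Then d/dt D(x(t)‖y_A(θ(t))) ≤ 0 for all t, with equality at time t if and only if both x(t) is the E-projection of y_A(θ(t)) to {x ∈ ℝ^n_{≥0} : 𝒮x = 𝒮x(0)} and A(x(t) −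 y_A(θ(t))) = 0. -/

import Mathlib

/-!
Write `F⁺_l = k_l⁺ θ^{d_l} x^{b_l⁺}` and `F⁻_l = k_l⁻ θ^{e_l} x^{b_l⁻}`. The rate condition turns
`⟨b_l, log (x / y_A(θ))⟩` into `log F⁺_l - log F⁻_l`, and `θ̇ = A(x - y_A(θ))` makes the `θ`-part of
the derivative a negative square, so
`d/dt D(x‖y_A(θ)) = -∑_l (F⁺_l - F⁻_l)(log F⁺_l - log F⁻_l) - ∑_i θ̇_i² / θ_i ≤ 0`,
with equality iff `F⁺_l = F⁻_l` for all `l` and `θ̇ = 0`. The first condition says that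
`log (x / y_A(θ))` is orthogonal to the lattice `ker 𝒮 ∩ ℤⁿ`, hence (clearing denominators and
expanding real vectors in a `ℚ`-basis of `ℝ`) to the real kernel of `𝒮`. By the Pythagorean
identity `D(z‖y) = D(z‖x) + D(x‖y) + ⟨z - x, log (x / y)⟩` this orthogonality characterises the
E-projection of `y` onto `x + ker 𝒮`, which is the conservation class of `x(0)` because `𝒮 ẋ = 0`.
-/

/-- Extended relative entropy `D(x‖y)` (real-valued form, valid when `y` has
positive entries and `x` has nonnegative entries). -/
noncomputable def KL {ι : Type*} [Fintype ι] (x y : ι → ℝ) : ℝ :=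
  ∑ i, (x i * Real.log (x i / y i) - x i + y i)

/-- The exponential-family parametrization `y_A(θ)_j = c_j ∏_i θ_i^{a_{ij}}`. -/
def yA {m n : ℕ} (A : Matrix (Fin m) (Fin n) ℕ) (c : Fin n → ℝ)
    (θ : Fin m → ℝ) : Fin n → ℝ :=
  fun j => c j * ∏ i, θ i ^ A i j

open Finset Matrix

lemma sub_mul_log_sub_log_nonneg {a b : ℝ} (ha : 0 < a) (hb : 0 < b) :
    0 ≤ (a - b) * (Real.log a - Real.log b) := by
  rcases le_total a b with h | h
  · exact mul_nonneg_of_nonpos_of_nonpos (sub_nonpos.2 h) (sub_nonpos.2 (Real.log_le_log ha h))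
  · exact mul_nonneg (sub_nonneg.2 h) (sub_nonneg.2 (Real.log_le_log hb h))

lemma sub_mul_log_sub_log_eq_zero_iff {a b : ℝ} (ha : 0 < a) (hb : 0 < b) :
    (a - b) * (Real.log a - Real.log b) = 0 ↔ a = b := by
  rw [mul_eq_zero, sub_eq_zero, sub_eq_zero, Real.log_injOn_pos.eq_iff ha hb, or_self]

lemma mul_log_div_sub_add_nonneg {a b : ℝ} (ha : 0 ≤ a) (hb : 0 < b) :
    0 ≤ a * Real.log (a / b) - a + b := by
  have hkl : b * InformationTheory.klFun (a / b) = a * Real.log (a / b) - a + b := by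
    unfold InformationTheory.klFun
    field_simp
    ring
  exact hkl ▸ mul_nonneg hb.le (InformationTheory.klFun_nonneg (div_nonneg ha hb.le))

section KL

variable {ι : Type*} [Fintype ι]

noncomputable def logRatio (x y : ι → ℝ) : ι → ℝ := fun j => Real.log (x j / y j)

lemma KL_nonneg {x y : ι → ℝ} (hx : ∀ j, 0 ≤ x j) (hy : ∀ j, 0 < y j) : 0 ≤ KL x y :=
  sum_nonneg fun j _ => mul_log_div_sub_add_nonneg (hx j) (hy j)

lemma KL_eq_KL_add_KL_add_dotProduct {x y : ι → ℝ} (hx : ∀ j, 0 < x j) (hy : ∀ j, 0 < y j)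
    (z : ι → ℝ) : KL z y = KL z x + KL x y + (z - x) ⬝ᵥ logRatio x y := by
  have hlog : ∀ j, z j * Real.log (z j / y j) =
      z j * Real.log (z j / x j) + z j * Real.log (x j / y j) := by
    intro j
    rcases eq_or_ne (z j) 0 with hz | hz
    · simp [hz]
    · rw [← mul_add, ← Real.log_mul (div_ne_zero hz (hx j).ne') (div_ne_zero (hx j).ne' (hy j).ne'),
        div_mul_div_cancel₀ (hx j).ne']
  simp only [KL, dotProduct, logRatio, Pi.sub_apply, ← sum_add_distrib]
  exact sum_congr rfl fun j _ => by rw [hlog]; ring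

theorem hasDerivAt_KL {x y : ℝ → ι → ℝ} {x' y' : ι → ℝ} {t : ℝ} (hx : HasDerivAt x x' t)
    (hy : HasDerivAt y y' t) (hxt : ∀ j, 0 < x t j) (hyt : ∀ j, 0 < y t j) :
    HasDerivAt (fun s => KL (x s) (y s))
      (x' ⬝ᵥ logRatio (x t) (y t) + y' ⬝ᵥ fun j => 1 - x t j / y t j) t := by
  rw [dotProduct, dotProduct, ← sum_add_distrib]
  refine HasDerivAt.fun_sum fun j _ => ?_
  have hxj := hasDerivAt_pi.1 hx j
  have hyj := hasDerivAt_pi.1 hy j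
  have hlog := (hxj.fun_div hyj (hyt j).ne').log (div_ne_zero (hxt j).ne' (hyt j).ne')
  convert ((hxj.fun_mul hlog).fun_sub hxj).fun_add hyj using 1
  have hx0 := (hxt j).ne'
  have hy0 := (hyt j).ne'
  rw [logRatio]
  field_simp
  ring

theorem KL_le_iff_dotProduct_logRatio_eq_zero {κ : Type*} [Fintype κ] (S : Matrix κ ι ℝ)
    {x y : ι → ℝ} (hx : ∀ j, 0 < x j) (hy : ∀ j, 0 < y j) :
    (∀ z, (∀ j, 0 ≤ z j) → S *ᵥ z = S *ᵥ x → KL x y ≤ KL z y) ↔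
      ∀ u, S *ᵥ u = 0 → u ⬝ᵥ logRatio x y = 0 := by
  constructor
  · intro hmin u hu
    have hderiv : HasDerivAt (fun ε : ℝ => KL (x + ε • u) y) (u ⬝ᵥ logRatio x y) 0 := by
      have hline : HasDerivAt (fun ε : ℝ => x + ε • u) u 0 := by
        simpa using ((hasDerivAt_id (0 : ℝ)).smul_const u).const_add x
      simpa using hasDerivAt_KL hline (hasDerivAt_const 0 y) (by simpa using hx) hy
    refine IsLocalMin.hasDerivAt_eq_zero ?_ hderiv
    have hpos : ∀ᶠ ε in nhds (0 : ℝ), ∀ j, 0 < x j + ε * u j :=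
      Filter.eventually_all.2 fun j => continuousAt_const.eventually_lt (by fun_prop)
        (by simpa using hx j)
    filter_upwards [hpos] with ε hε
    simpa using hmin (x + ε • u) (fun j => (hε j).le) (by simp [mulVec_add, mulVec_smul, hu])
  · intro horth z hz hSz
    rw [KL_eq_KL_add_KL_add_dotProduct hx hy z, horth _ (by rw [mulVec_sub, hSz, sub_self]),
      add_zero]
    exact le_add_of_nonneg_left (KL_nonneg hz hx)

end KL

section Lattice

variable {ι κ : Type*} [Fintype ι]

lemma mulVec_map_intCast_eq_zero {F : Type*} [Ring F] {S : Matrix κ ι ℤ} {v : ι → ℤ}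
    (h : S *ᵥ v = 0) : S.map Int.cast *ᵥ (fun j => (v j : F)) = 0 := by
  funext i
  simpa [mulVec, dotProduct] using congrArg (Int.cast : ℤ → F) (congrFun h i)

theorem dotProduct_eq_zero_of_mulVec_map_eq_zero {K F : Type*} [Field K] [Field F]
    [Algebra K F] {S : Matrix κ ι K} {L : ι → F}
    (hL : ∀ w : ι → K, S *ᵥ w = 0 → (fun j => algebraMap K F (w j)) ⬝ᵥ L = 0)
    {u : ι → F} (hu : S.map (algebraMap K F) *ᵥ u = 0) : u ⬝ᵥ L = 0 := by
  -- Expand `u` in a `K`-basis of the `K`-span of its entries: the coefficient vectors lie in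
  -- the `K`-kernel of `S`.
  let W := Submodule.span K (Set.range u)
  have : FiniteDimensional K W := FiniteDimensional.span_of_finite K (Set.finite_range u)
  let B := Module.finBasis K W
  have hmem : ∀ j, u j ∈ W := fun j => Submodule.subset_span ⟨j, rfl⟩
  let w : Fin (Module.finrank K W) → ι → K := fun α j => B.repr ⟨u j, hmem j⟩ α
  have hu_eq : ∀ j, u j = ∑ α, algebraMap K F (w α j) * B α := by
    intro j
    have := congrArg Subtype.val (B.sum_repr ⟨u j, hmem j⟩)
    rw [Submodule.coe_sum] at this
    simp only [Submodule.coe_smul, Algebra.smul_def] at this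
    exact this.symm
  have hw : ∀ α, S *ᵥ w α = 0 := by
    have hli : LinearIndependent K (fun α => (B α : F)) :=
      B.linearIndependent.map' W.subtype (Submodule.ker_subtype _)
    intro α
    ext i
    refine Fintype.linearIndependent_iff.1 hli (fun α => (S *ᵥ w α) i) ?_ α
    calc ∑ α, (S *ᵥ w α) i • (B α : F) = (S.map (algebraMap K F) *ᵥ u) i := by
          simp only [mulVec, dotProduct, map_apply, hu_eq, mul_sum, sum_mul, Algebra.smul_def,
            map_sum, map_mul]
          rw [sum_comm]
          exact sum_congr rfl fun _ _ => sum_congr rfl fun _ _ => by ring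
      _ = 0 := by rw [hu]; rfl
  calc u ⬝ᵥ L = ∑ α, (B α : F) * ((fun j => algebraMap K F (w α j)) ⬝ᵥ L) := by
        simp only [dotProduct, hu_eq, sum_mul, mul_sum]
        rw [sum_comm]
        exact sum_congr rfl fun _ _ => sum_congr rfl fun _ _ => by ring
    _ = 0 := by simp [hL _ (hw _)]

theorem dotProduct_ratCast_eq_zero_of_forall_int {F : Type*} [Field F] [CharZero F]
    {S : Matrix κ ι ℤ} {L : ι → F}
    (hL : ∀ v : ι → ℤ, S *ᵥ v = 0 → (fun j => (v j : F)) ⬝ᵥ L = 0)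
    {w : ι → ℚ} (hw : S.map Int.cast *ᵥ w = 0) : (fun j => (w j : F)) ⬝ᵥ L = 0 := by
  obtain ⟨N, hN⟩ := IsLocalization.exist_integer_multiples_of_finite (nonZeroDivisors ℤ) w
  choose v hvN using hN
  have hv : ∀ j, (v j : ℚ) = (N : ℤ) * w j := fun j => by simpa using hvN j
  have hSv : S *ᵥ v = 0 := by
    funext i
    have : ((S *ᵥ v) i : ℚ) = (N : ℤ) * (S.map Int.cast *ᵥ w) i := by
      simp only [mulVec, dotProduct, map_apply, Int.cast_sum, Int.cast_mul, hv, mul_sum]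
      exact sum_congr rfl fun _ _ => by ring
    rw [hw] at this
    exact_mod_cast this.trans (mul_zero _)
  have hN0 : ((N : ℤ) : F) ≠ 0 := by exact_mod_cast nonZeroDivisors.coe_ne_zero N
  have : ((N : ℤ) : F) * ((fun j => (w j : F)) ⬝ᵥ L) = 0 := by
    rw [← hL v hSv, dotProduct, dotProduct, mul_sum]
    refine sum_congr rfl fun j _ => ?_
    rw [show (v j : F) = ((v j : ℚ) : F) by simp, hv j]
    push_cast
    ring
  exact (mul_eq_zero.1 this).resolve_left hN0

theorem forall_dotProduct_eq_zero_iff_of_span_ker {F : Type*} [Field F] [CharZero F]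
    {σ : Type*} [Fintype σ] {S : Matrix κ ι ℤ} {b : σ → ι → ℤ} (hbker : ∀ l, S *ᵥ b l = 0)
    (hbspan : ∀ v, S *ᵥ v = 0 → ∃ mm : σ → ℤ, v = ∑ l, mm l • b l) (L : ι → F) :
    (∀ l, (fun j => (b l j : F)) ⬝ᵥ L = 0) ↔ ∀ u, S.map Int.cast *ᵥ u = 0 → u ⬝ᵥ L = 0 := by
  constructor
  · intro hL u hu
    have hint : ∀ v : ι → ℤ, S *ᵥ v = 0 → (fun j => (v j : F)) ⬝ᵥ L = 0 := by
      intro v hv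
      obtain ⟨mm, rfl⟩ := hbspan v hv
      calc (fun j => ((∑ l, mm l • b l) j : F)) ⬝ᵥ L
          = ∑ l, (mm l : F) * ((fun j => (b l j : F)) ⬝ᵥ L) := by
            simp only [Finset.sum_apply, Pi.smul_apply, smul_eq_mul, Int.cast_sum, Int.cast_mul,
              dotProduct, mul_sum, sum_mul]
            rw [sum_comm]
            exact sum_congr rfl fun _ _ => sum_congr rfl fun _ _ => by ring
        _ = 0 := by simp [hL]
    refine dotProduct_eq_zero_of_mulVec_map_eq_zero (K := ℚ) (S := S.map Int.cast)
      (fun w hw => by simpa using dotProduct_ratCast_eq_zero_of_forall_int hint hw) ?_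
    simpa [Matrix.map_map] using hu
  · exact fun h l => h _ (mulVec_map_intCast_eq_zero (hbker l))

end Lattice

theorem mulVec_eq_of_hasDerivAt {ι κ : Type*} [Fintype ι] [Fintype κ] (S : Matrix κ ι ℝ)
    {x x' : ℝ → ι → ℝ} (hx : ∀ s, 0 ≤ s → HasDerivAt x (x' s) s)
    (hS : ∀ s, 0 ≤ s → S *ᵥ x' s = 0) {t : ℝ} (ht : 0 ≤ t) : S *ᵥ x t = S *ᵥ x 0 := by
  let T := LinearMap.toContinuousLinearMap S.mulVecLin
  have hT : ∀ s, 0 ≤ s → HasDerivAt (fun s => S *ᵥ x s) 0 s := fun s hs => by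
    have := (T.hasFDerivAt (x := x s)).comp_hasDerivAt s (hx s hs)
    rwa [show T (x' s) = 0 from hS s hs] at this
  refine constant_of_has_deriv_right_zero (fun s hs => (hT s hs.1).continuousAt.continuousWithinAt)
    (fun s hs => (hT s hs.1).hasDerivWithinAt) t ⟨ht, le_rfl⟩

section MassAction

variable {κ ι : Type*} [Fintype κ] [Fintype ι]

def massAction (k : ℝ) (θ : κ → ℝ) (d : κ → ℕ) (x : ι → ℝ) (v : ι → ℕ) : ℝ :=
  k * (∏ i, θ i ^ d i) * ∏ j, x j ^ v j

lemma massAction_pos {k : ℝ} (hk : 0 < k) {θ : κ → ℝ} (hθ : ∀ i, 0 < θ i) (d : κ → ℕ)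
    {x : ι → ℝ} (hx : ∀ j, 0 < x j) (v : ι → ℕ) : 0 < massAction k θ d x v :=
  mul_pos (mul_pos hk (prod_pos fun i _ => pow_pos (hθ i) _)) (prod_pos fun j _ => pow_pos (hx j) _)

lemma prod_zpow_natCast_sub {K : Type*} [Field K] {x : ι → K} (hx : ∀ j, x j ≠ 0)
    (a b : ι → ℕ) :
    ∏ j, x j ^ ((a j : ℤ) - b j) = (∏ j, x j ^ a j) / ∏ j, x j ^ b j := by
  rw [← prod_div_distrib]
  exact prod_congr rfl fun j _ => by rw [zpow_sub₀ (hx j), zpow_natCast, zpow_natCast]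

theorem dotProduct_logRatio_eq_log_sub_log {kp km : ℝ} (hkp : 0 < kp) (hkm : 0 < km)
    {θ : κ → ℝ} (hθ : ∀ i, 0 < θ i) {d e : κ → ℕ} {x y : ι → ℝ} (hx : ∀ j, 0 < x j)
    (hy : ∀ j, 0 < y j) {b : ι → ℤ}
    (hrate : km / kp * ∏ i, θ i ^ ((e i : ℤ) - d i) = ∏ j, y j ^ b j) :
    (fun j => (b j : ℝ)) ⬝ᵥ logRatio x y =
      Real.log (massAction kp θ d x fun j => (b j).toNat) -
        Real.log (massAction km θ e x fun j => (-b j).toNat) := by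
  have hxb : ∏ j, x j ^ b j = (∏ j, x j ^ (b j).toNat) / ∏ j, x j ^ (-b j).toNat := by
    simp only [← prod_zpow_natCast_sub (fun j => (hx j).ne'), Int.toNat_sub_toNat_neg]
  have hyb : ∏ j, y j ^ b j = km / kp * ((∏ i, θ i ^ e i) / ∏ i, θ i ^ d i) := by
    rw [← hrate, prod_zpow_natCast_sub fun i => (hθ i).ne']
  rw [← Real.log_div (massAction_pos hkp hθ d hx _).ne' (massAction_pos hkm hθ e hx _).ne']
  simp only [dotProduct, logRatio]
  simp_rw [← Real.log_zpow]
  rw [← Real.log_prod fun j _ => (zpow_pos (div_pos (hx j) (hy j)) _).ne']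
  simp_rw [div_zpow, prod_div_distrib, hxb, hyb, massAction]
  have : ∏ i, θ i ^ d i ≠ 0 := (prod_pos fun i _ => pow_pos (hθ i) _).ne'
  have : ∏ i, θ i ^ e i ≠ 0 := (prod_pos fun i _ => pow_pos (hθ i) _).ne'
  have : ∏ j, x j ^ (-b j).toNat ≠ 0 := (prod_pos fun j _ => pow_pos (hx j) _).ne'
  congr 1
  field_simp [hkp.ne', hkm.ne']

end MassAction

lemma yA_pos {m n : ℕ} (A : Matrix (Fin m) (Fin n) ℕ) {c : Fin n → ℝ} (hc : ∀ j, 0 < c j)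
    {θ : Fin m → ℝ} (hθ : ∀ i, 0 < θ i) (j : Fin n) : 0 < yA A c θ j :=
  mul_pos (hc j) (prod_pos fun i _ => pow_pos (hθ i) _)

theorem hasDerivAt_yA {m n : ℕ} (A : Matrix (Fin m) (Fin n) ℕ) (c : Fin n → ℝ)
    {θ : ℝ → Fin m → ℝ} {θ' : Fin m → ℝ} {t : ℝ} (hθ : HasDerivAt θ θ' t)
    (hθt : ∀ i, θ t i ≠ 0) :
    HasDerivAt (fun s => yA A c (θ s))
      (fun j => yA A c (θ t) j * ((fun i => θ' i / θ t i) ᵥ* A.map (↑)) j) t := by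
  refine hasDerivAt_pi.2 fun j => ?_
  have hpow : ∀ i ∈ univ, HasDerivAt (fun s => θ s i ^ A i j)
      (θ t i ^ A i j * (θ' i / θ t i * A i j)) t := by
    intro i _
    refine ((hasDerivAt_pi.1 hθ i).fun_pow (A i j)).congr_deriv ?_
    rcases Nat.eq_zero_or_pos (A i j) with h | h
    · simp [h]
    · rw [← pow_sub_one_mul h.ne']
      field_simp [hθt i]
  refine ((HasDerivAt.fun_finsetProd hpow).const_mul (c j)).congr_deriv ?_
  rw [yA, vecMul, dotProduct, mul_sum, mul_sum]
  refine sum_congr rfl fun i _ => ?_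
  rw [← prod_erase_mul _ _ (mem_univ i), smul_eq_mul, map_apply]
  ring

noncomputable def dissipation {σ κ : Type*} [Fintype σ] [Fintype κ] (Fp Fm : σ → ℝ)
    (θ w : κ → ℝ) : ℝ :=
  ∑ l, (Fp l - Fm l) * (Real.log (Fp l) - Real.log (Fm l)) + ∑ i, w i ^ 2 / θ i

section Dissipation

variable {σ κ : Type*} [Fintype σ] [Fintype κ] {Fp Fm : σ → ℝ} {θ : κ → ℝ}

lemma dissipation_nonneg (hFp : ∀ l, 0 < Fp l) (hFm : ∀ l, 0 < Fm l) (hθ : ∀ i, 0 < θ i)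
    (w : κ → ℝ) : 0 ≤ dissipation Fp Fm θ w :=
  add_nonneg (sum_nonneg fun l _ => sub_mul_log_sub_log_nonneg (hFp l) (hFm l))
    (sum_nonneg fun i _ => div_nonneg (sq_nonneg _) (hθ i).le)

lemma dissipation_eq_zero_iff (hFp : ∀ l, 0 < Fp l) (hFm : ∀ l, 0 < Fm l) (hθ : ∀ i, 0 < θ i)
    (w : κ → ℝ) : dissipation Fp Fm θ w = 0 ↔ (∀ l, Fp l = Fm l) ∧ ∀ i, w i = 0 := by
  have h₁ := fun l (_ : l ∈ univ) => sub_mul_log_sub_log_nonneg (hFp l) (hFm l)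
  have h₂ := fun i (_ : i ∈ univ) => div_nonneg (sq_nonneg (w i)) (hθ i).le
  rw [dissipation, add_eq_zero_iff_of_nonneg (sum_nonneg h₁) (sum_nonneg h₂),
    sum_eq_zero_iff_of_nonneg h₁, sum_eq_zero_iff_of_nonneg h₂]
  simp [sub_mul_log_sub_log_eq_zero_iff (hFp _) (hFm _), (hθ _).ne']

end Dissipation

theorem hasDerivAt_KL_yA {m n : ℕ} {σ : Type*} [Fintype σ] {A : Matrix (Fin m) (Fin n) ℕ}
    {c : Fin n → ℝ} (hc : ∀ j, 0 < c j) {b : σ → Fin n → ℝ} {Fp Fm : σ → ℝ}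
    {x : ℝ → Fin n → ℝ} {θ : ℝ → Fin m → ℝ} {t : ℝ} (hx : ∀ j, 0 < x t j)
    (hθ : ∀ i, 0 < θ t i)
    (hF : ∀ l, b l ⬝ᵥ logRatio (x t) (yA A c (θ t)) = Real.log (Fp l) - Real.log (Fm l))
    (hxode : HasDerivAt x (∑ l, (Fm l - Fp l) • b l) t)
    (hθode : HasDerivAt θ (A.map (↑) *ᵥ (x t - yA A c (θ t))) t) :
    HasDerivAt (fun s => KL (x s) (yA A c (θ s)))
      (-dissipation Fp Fm (θ t) (A.map (↑) *ᵥ (x t - yA A c (θ t)))) t := by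
  set y := yA A c (θ t)
  set w := A.map ((↑) : ℕ → ℝ) *ᵥ (x t - y)
  have hy : ∀ j, 0 < y j := yA_pos A hc hθ
  refine (hasDerivAt_KL hxode (hasDerivAt_yA A c hθode fun i => (hθ i).ne') hx hy).congr_deriv ?_
  have hxpart : (∑ l, (Fm l - Fp l) • b l) ⬝ᵥ logRatio (x t) y =
      -∑ l, (Fp l - Fm l) * (Real.log (Fp l) - Real.log (Fm l)) := by
    simp only [sum_dotProduct, smul_dotProduct, hF, smul_eq_mul, ← sum_neg_distrib]
    exact sum_congr rfl fun l _ => by ring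
  have hθpart : (fun j => y j * ((fun i => w i / θ t i) ᵥ* A.map (↑)) j) ⬝ᵥ
      (fun j => 1 - x t j / y j) = -∑ i, w i ^ 2 / θ t i := by
    calc _ = ((fun i => w i / θ t i) ᵥ* A.map (↑)) ⬝ᵥ (y - x t) := by
          simp only [dotProduct, Pi.sub_apply]
          exact sum_congr rfl fun j _ => by field_simp [(hy j).ne']
      _ = (fun i => w i / θ t i) ⬝ᵥ -w := by
          rw [← dotProduct_mulVec, ← neg_sub, mulVec_neg]
      _ = -∑ i, w i ^ 2 / θ t i := by
          simp only [dotProduct, Pi.neg_apply, ← sum_neg_distrib]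
          exact sum_congr rfl fun i _ => by ring
  rw [hxpart, hθpart, dissipation]
  ring

theorem em_scheme_lyapunov_general
    {m n p r : ℕ} (A : Matrix (Fin m) (Fin n) ℕ) (c : Fin n → ℝ)
    (hc : ∀ j, 0 < c j)
    (𝒮 : Matrix (Fin p) (Fin n) ℤ)
    (b : Fin r → Fin n → ℤ)
    -- `b` is a ℤ-basis of the lattice `(ker 𝒮) ∩ ℤ^n`:
    (hbker : ∀ l, ∀ i, ∑ j, 𝒮 i j * b l j = 0)
    (hbspan : ∀ v : Fin n → ℤ, (∀ i, ∑ j, 𝒮 i j * v j = 0) →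
      ∃ mm : Fin r → ℤ, v = ∑ l, mm l • b l)
    (kp km : Fin r → ℝ) (hkp : ∀ l, 0 < kp l) (hkm : ∀ l, 0 < km l)
    (d e : Fin r → Fin m → ℕ)
    (hrates : ∀ θ' : Fin m → ℝ, (∀ i, 0 < θ' i) → ∀ l,
      km l / kp l * ∏ i, θ' i ^ ((e l i : ℤ) - (d l i : ℤ)) =
        ∏ j, (yA A c θ' j) ^ (b l j))
    (x : ℝ → Fin n → ℝ) (θ : ℝ → Fin m → ℝ)
    (hxpos : ∀ t, 0 ≤ t → ∀ j, 0 < x t j)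
    (hθpos : ∀ t, 0 ≤ t → ∀ i, 0 < θ t i)
    (hxode : ∀ t, 0 ≤ t → HasDerivAt x
      (∑ l, (km l * (∏ i, θ t i ^ e l i) * (∏ j, x t j ^ (-(b l j)).toNat)
            - kp l * (∏ i, θ t i ^ d l i) * (∏ j, x t j ^ (b l j).toNat)) •
        (fun j => (b l j : ℝ))) t)
    (hθode : ∀ t, 0 ≤ t → HasDerivAt θ
      (fun i => ∑ j, (A i j : ℝ) * (x t j - yA A c (θ t) j)) t) :
    ∀ t, 0 ≤ t → ∃ der : ℝ,
      HasDerivAt (fun s => KL (x s) (yA A c (θ s))) der t ∧ der ≤ 0 ∧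
        (der = 0 ↔
          ((((∀ j, 0 ≤ x t j) ∧
              ∀ i, ∑ j, (𝒮 i j : ℝ) * x t j = ∑ j, (𝒮 i j : ℝ) * x 0 j) ∧
            ∀ z : Fin n → ℝ,
              ((∀ j, 0 ≤ z j) ∧
                ∀ i, ∑ j, (𝒮 i j : ℝ) * z j = ∑ j, (𝒮 i j : ℝ) * x 0 j) →
              KL (x t) (yA A c (θ t)) ≤ KL z (yA A c (θ t))) ∧
          ∀ i, ∑ j, (A i j : ℝ) * (x t j - yA A c (θ t) j) = 0)) := by
  intro t ht
  have hx := hxpos t ht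
  have hθ := hθpos t ht
  have hy := yA_pos A hc hθ
  set Fp := fun l => massAction (kp l) (θ t) (d l) (x t) fun j => (b l j).toNat
  set Fm := fun l => massAction (km l) (θ t) (e l) (x t) fun j => (-b l j).toNat
  have hFp : ∀ l, 0 < Fp l := fun l => massAction_pos (hkp l) hθ _ hx _
  have hFm : ∀ l, 0 < Fm l := fun l => massAction_pos (hkm l) hθ _ hx _
  have hF : ∀ l, (fun j => (b l j : ℝ)) ⬝ᵥ logRatio (x t) (yA A c (θ t)) =
      Real.log (Fp l) - Real.log (Fm l) := fun l =>
    dotProduct_logRatio_eq_log_sub_log (hkp l) (hkm l) hθ hx hy (hrates _ hθ l)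
  have hbker : ∀ l, 𝒮 *ᵥ b l = 0 := fun l => funext (hbker l)
  have hcons : 𝒮.map Int.cast *ᵥ x t = 𝒮.map Int.cast *ᵥ x 0 :=
    mulVec_eq_of_hasDerivAt _ hxode (fun s _ => by
      simp only [mulVec_sum, mulVec_smul, mulVec_map_intCast_eq_zero (hbker _), smul_zero,
        sum_const_zero]) ht
  refine ⟨_, hasDerivAt_KL_yA hc hx hθ hF (hxode t ht) (hθode t ht),
    neg_nonpos.2 (dissipation_nonneg hFp hFm hθ _), ?_⟩
  have hproj : (∀ l, Fp l = Fm l) ↔ ∀ z : Fin n → ℝ, (∀ j, 0 ≤ z j) →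
      𝒮.map Int.cast *ᵥ z = 𝒮.map Int.cast *ᵥ x t →
        KL (x t) (yA A c (θ t)) ≤ KL z (yA A c (θ t)) := by
    rw [KL_le_iff_dotProduct_logRatio_eq_zero _ hx hy,
      ← forall_dotProduct_eq_zero_iff_of_span_ker hbker fun v hv => hbspan v (congrFun hv)]
    simp only [hF, sub_eq_zero, Real.log_injOn_pos.eq_iff (hFp _) (hFm _)]
  rw [neg_eq_zero, dissipation_eq_zero_iff hFp hFm hθ, hproj, hcons]
  exact and_congr
    ⟨fun h => ⟨⟨fun j => (hx j).le, congrFun hcons⟩, fun z hz => h z hz.1 (funext hz.2)⟩,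
      fun h z hz hSz => h.2 z ⟨hz, congrFun hSz⟩⟩ Iff.rfl

/-- EM scheme, Lyapunov property: along a trajectory
`(x(t), θ(t))` of the EM reaction network dynamics,
`d/dt D(x(t)‖y_A(θ(t))) ≤ 0`, with equality at time `t` iff both `x(t)` is the
E-projection of `y_A(θ(t))` to `{x ∈ ℝ^n_{≥0} : 𝒮x = 𝒮x(0)}` and
`A(x(t) − y_A(θ(t))) = 0`. -/
theorem em_scheme_lyapunov
    {m n p r : ℕ} (A : Matrix (Fin m) (Fin n) ℕ) (c : Fin n → ℝ)
    (hc : ∀ j, 0 < c j)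
    (𝒮 : Matrix (Fin p) (Fin n) ℤ)
    (b : Fin r → Fin n → ℤ)
    -- `b` is a ℤ-basis of the lattice `(ker 𝒮) ∩ ℤ^n`:
    (hbker : ∀ l, ∀ i, ∑ j, 𝒮 i j * b l j = 0)
    (hbspan : ∀ v : Fin n → ℤ, (∀ i, ∑ j, 𝒮 i j * v j = 0) →
      ∃ mm : Fin r → ℤ, v = ∑ l, mm l • b l)
    (hbindep : LinearIndependent ℤ b)
    (kp km : Fin r → ℝ) (hkp : ∀ l, 0 < kp l) (hkm : ∀ l, 0 < km l)
    (d e : Fin r → Fin m → ℕ)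
    (hrates : ∀ θ' : Fin m → ℝ, (∀ i, 0 < θ' i) → ∀ l,
      km l / kp l * ∏ i, θ' i ^ ((e l i : ℤ) - (d l i : ℤ)) =
        ∏ j, (yA A c θ' j) ^ (b l j))
    (x : ℝ → Fin n → ℝ) (θ : ℝ → Fin m → ℝ)
    (hxpos : ∀ t, 0 ≤ t → ∀ j, 0 < x t j)
    (hθpos : ∀ t, 0 ≤ t → ∀ i, 0 < θ t i)
    (hxode : ∀ t, 0 ≤ t → HasDerivAt x
      (∑ l, (km l * (∏ i, θ t i ^ e l i) * (∏ j, x t j ^ (-(b l j)).toNat)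
            - kp l * (∏ i, θ t i ^ d l i) * (∏ j, x t j ^ (b l j).toNat)) •
        (fun j => (b l j : ℝ))) t)
    (hθode : ∀ t, 0 ≤ t → HasDerivAt θ
      (fun i => ∑ j, (A i j : ℝ) * (x t j - yA A c (θ t) j)) t) :
    ∀ t, 0 ≤ t → ∃ der : ℝ,
      HasDerivAt (fun s => KL (x s) (yA A c (θ s))) der t ∧ der ≤ 0 ∧
        (der = 0 ↔
          ((((∀ j, 0 ≤ x t j) ∧
              ∀ i, ∑ j, (𝒮 i j : ℝ) * x t j = ∑ j, (𝒮 i j : ℝ) * x 0 j) ∧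
            ∀ z : Fin n → ℝ,
              ((∀ j, 0 ≤ z j) ∧
                ∀ i, ∑ j, (𝒮 i j : ℝ) * z j = ∑ j, (𝒮 i j : ℝ) * x 0 j) →
              KL (x t) (yA A c (θ t)) ≤ KL z (yA A c (θ t))) ∧
          ∀ i, ∑ j, (A i j : ℝ) * (x t j - yA A c (θ t) j) = 0)) :=
  em_scheme_lyapunov_general A c hc 𝒮 b hbker hbspan kp km hkp hkm d e hrates x θ hxpos hθpos hxode
    hθode
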